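/- arXiv:2605.04452 — 3 statements merged into one kernel-verified Lean document; each statement's English description precedes it below -/
import Mathlib

section
/- Let W be a nonempty set of states, N a set of agents, and E : Set N → Set (Set W) a playable effectivity function. For every coalition C ⊆ N and every X ⊆ W, if FC(C,X) holds then FI(N∖C, X) holds: if C can enforce both X and its complement, then the complementary coalition can enforce neither X nor its complement. -/
structure Playable (W N : Type*) (E : Set N → Set (Set W)) : Prop where
  liveness : ∀ C : Set N, (∅ : Set W) ∉ E C
  safety : ∀ C : Set N, (Set.univ : Set W) ∈ E C
  outcomeMono : ∀ (C : Set N) (X Y : Set W), X ∈ E C → X ⊆ Y → Y ∈ E C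
  superadd : ∀ (C D : Set N) (X Y : Set W),
      C ∩ D = ∅ → X ∈ E C → Y ∈ E D → X ∩ Y ∈ E (C ∪ D)
  nMax : ∀ X : Set W, X ∉ E (∅ : Set N) ↔ Xᶜ ∈ E (Set.univ : Set N)


def FC {W N : Type*} (E : Set N → Set (Set W)) (C : Set N) (X : Set W) : Prop :=
  X ∈ E C ∧ Xᶜ ∈ E C

def PD {W N : Type*} (E : Set N → Set (Set W)) (C : Set N) (X : Set W) : Prop :=
  X ∈ E C ∧ Xᶜ ∉ E C

def AD {W N : Type*} (E : Set N → Set (Set W)) (C : Set N) (X : Set W) : Prop :=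
  X ∉ E C ∧ Xᶜ ∈ E C

def FI {W N : Type*} (E : Set N → Set (Set W)) (C : Set N) (X : Set W) : Prop :=
  X ∉ E C ∧ Xᶜ ∉ E C

/-- Superadditivity would let the disjoint coalitions `C` and `D` jointly force `X ∩ Y = ∅`,
which liveness forbids. -/
theorem Playable.notMem_of_disjoint {W N : Type*} {E : Set N → Set (Set W)} (hE : Playable W N E)
    {C D : Set N} {X Y : Set W} (hCD : Disjoint C D) (hXY : Disjoint X Y) (hX : X ∈ E C) :
    Y ∉ E D := fun hY =>
  hE.liveness (C ∪ D) (by simpa only [hXY.inter_eq] using hE.superadd C D X Y hCD.inter_eq hX hY)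

theorem fc_implies_fi_complement_general {W N : Type*}
    (E : Set N → Set (Set W)) (hE : Playable W N E)
    (C : Set N) (X : Set W) :
    FC E C X → FI E Cᶜ X := by
  rintro ⟨hX, hXc⟩
  exact ⟨hE.notMem_of_disjoint disjoint_compl_right disjoint_compl_left hXc,
    hE.notMem_of_disjoint disjoint_compl_right disjoint_compl_right hX⟩

/-- One-way polarity: Full Control for `C` entails Full Inability for the
complementary coalition. -/
theorem fc_implies_fi_complement {W N : Type*} [Nonempty W]
    (E : Set N → Set (Set W)) (hE : Playable W N E)
    (C : Set N) (X : Set W) :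
    FC E C X → FI E Cᶜ X :=
  fc_implies_fi_complement_general E hE C X
end

section
/- Let W be a set of states, N a set of agents, and E : Set N → Set (Set W) an effectivity function satisfying outcome monotonicity (if X ∈ E(C) and X ⊆ Y then Y ∈ E(C)). Fix a coalition C ⊆ N. Then each of the four power regions R_FC(C) = {X : X ∈ E(C) ∧ W∖X ∈ E(C)}, R_PD(C) = {X : X ∈ E(C) ∧ W∖X ∉ E(C)}, R_AD(C) = {X : X ∉ E(C) ∧ W∖X ∈ E(C)}, and R_FI(C) = {X : X ∉ E(C) ∧ W∖X ∉ E(C)} is order-convex in the powerset of W: if X ⊆ Y ⊆ Z and both X and Z belong to one of these regions, then Y belongs to the same region. -/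
/-- The four power regions of subsets of `W` for coalition `C`. -/
def Rfc {W N : Type*} (E : Set N → Set (Set W)) (C : Set N) : Set (Set W) :=
  {X | X ∈ E C ∧ Xᶜ ∈ E C}

def Rpd {W N : Type*} (E : Set N → Set (Set W)) (C : Set N) : Set (Set W) :=
  {X | X ∈ E C ∧ Xᶜ ∉ E C}

def Rad {W N : Type*} (E : Set N → Set (Set W)) (C : Set N) : Set (Set W) :=
  {X | X ∉ E C ∧ Xᶜ ∈ E C}

def Rfi {W N : Type*} (E : Set N → Set (Set W)) (C : Set N) : Set (Set W) :=
  {X | X ∉ E C ∧ Xᶜ ∉ E C}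

/-- A family of subsets is order-convex in the powerset lattice. -/
def OrderConvex {W : Type*} (S : Set (Set W)) : Prop :=
  ∀ X Y Z : Set W, X ∈ S → Z ∈ S → X ⊆ Y → Y ⊆ Z → Y ∈ S

/-! Monotonicity makes `E C` an upper set of `Set W`, and since complementation reverses
inclusion, `{X | Xᶜ ∈ E C}` is a lower set. Each power region is the intersection of the first
family or its complement with the second family or its complement, hence an intersection of
upper and lower sets; these are order-convex, and order-convexity is preserved by intersections. -/

theorem orderConvex_iff_ordConnected {W : Type*} {S : Set (Set W)} :
    OrderConvex S ↔ S.OrdConnected := by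
  rw [Set.ordConnected_iff]
  exact ⟨fun h X hX Z hZ _ Y hY => h X Y Z hX hZ hY.1 hY.2,
    fun h X Y Z hX hZ hXY hYZ => h X hX Z hZ (hXY.trans hYZ) ⟨hXY, hYZ⟩⟩

theorem IsUpperSet.isLowerSet_preimage_compl {α : Type*} [HeytingAlgebra α] {s : Set α}
    (hs : IsUpperSet s) : IsLowerSet (Compl.compl ⁻¹' s) :=
  fun _ _ hba ha => hs (compl_le_compl hba) ha

/-- Convexity of power regions: each of the four power regions is
order-convex in the powerset of `W`. -/
theorem power_regions_order_convex {W N : Type*} (E : Set N → Set (Set W))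
    (hmono : ∀ (C : Set N) (X Y : Set W), X ∈ E C → X ⊆ Y → Y ∈ E C)
    (C : Set N) :
    OrderConvex (Rfc E C) ∧ OrderConvex (Rpd E C) ∧
    OrderConvex (Rad E C) ∧ OrderConvex (Rfi E C) := by
  have hup : IsUpperSet (E C) := fun X Y hXY hX => hmono C X Y hX hXY
  have hlow : IsLowerSet (compl ⁻¹' E C) := hup.isLowerSet_preimage_compl
  simp only [orderConvex_iff_ordConnected]
  exact ⟨hup.ordConnected.inter hlow.ordConnected,
    hup.ordConnected.inter hlow.compl.ordConnected,
    hup.compl.ordConnected.inter hlow.ordConnected,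
    hup.compl.ordConnected.inter hlow.compl.ordConnected⟩
end

section
/- Let W be a nonempty set of states, N a set of agents, and E : Set N → Set (Set W) a playable effectivity function. For every coalition C ⊆ N and every X ⊆ W: (1) if PD(C,X) holds, then either PD(N∖C, X) or FI(N∖C, X) holds; (2) if AD(C,X) holds, then either AD(N∖C, X) or FI(N∖C, X) holds. -/
theorem pd_or_fi_iff {W N : Type*} (E : Set N → Set (Set W)) (C : Set N) (X : Set W) :
    PD E C X ∨ FI E C X ↔ Xᶜ ∉ E C := by
  unfold PD FI
  tauto

theorem ad_or_fi_iff {W N : Type*} (E : Set N → Set (Set W)) (C : Set N) (X : Set W) :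
    AD E C X ∨ FI E C X ↔ X ∉ E C := by
  unfold AD FI
  tauto

/-- Superadditivity would make `X ∩ Xᶜ = ∅` effective for `C ∪ Cᶜ`, contradicting liveness. -/
theorem Playable.compl_notMem_compl {W N : Type*} {E : Set N → Set (Set W)}
    (hE : Playable W N E) {C : Set N} {X : Set W} (hX : X ∈ E C) : Xᶜ ∉ E Cᶜ := by
  intro hXc
  have hempty := hE.superadd C Cᶜ X Xᶜ (Set.inter_compl_self C) hX hXc
  rw [Set.inter_compl_self] at hempty
  exact hE.liveness _ hempty

theorem complement_category_constraints_general {W N : Type*}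
    (E : Set N → Set (Set W)) (hE : Playable W N E)
    (C : Set N) (X : Set W) :
    (PD E C X → PD E Cᶜ X ∨ FI E Cᶜ X) ∧
    (AD E C X → AD E Cᶜ X ∨ FI E Cᶜ X) := by
  refine ⟨fun ⟨hX, _⟩ => ?_, fun ⟨_, hXc⟩ => ?_⟩
  · exact (pd_or_fi_iff E Cᶜ X).2 (hE.compl_notMem_compl hX)
  · exact (ad_or_fi_iff E Cᶜ X).2 (compl_compl X ▸ hE.compl_notMem_compl hXc)

/-- Category-level constraints on the complementary coalition in playable
models: PD for `C` forces PD or FI for the complement, and AD for `C` forces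
AD or FI for the complement. -/
theorem complement_category_constraints {W N : Type*} [Nonempty W]
    (E : Set N → Set (Set W)) (hE : Playable W N E)
    (C : Set N) (X : Set W) :
    (PD E C X → PD E Cᶜ X ∨ FI E Cᶜ X) ∧
    (AD E C X → AD E Cᶜ X ∨ FI E Cᶜ X) :=
  complement_category_constraints_general E hE C X
end
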